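/- Let φ be a reduction function on L, let p ∈ L be a proper element, and let b ∈ L be a compact element such that b^k is φ-δ₁-primary to p for every positive integer k and δ₁(φ(p)) = φ(δ₁(p)). Then √p is proper and b is φ-prime to √p. -/

import Mathlib

/-- A multiplicative lattice: a complete lattice with a commutative, associative
multiplication that distributes over arbitrary joins and whose greatest element `1`
is a multiplicative identity.  We also bundle the standing assumptions of the paper:
`L` is compactly generated, `1` is compact, and products of compact elements are
compact. -/
class MultiplicativeLattice (L : Type*) extends CompleteLattice L, CommMonoid L where
  mul_sSup : ∀ (a : L) (s : Set L), a * sSup s = ⨆ x ∈ s, a * x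
  one_eq_top : (1 : L) = ⊤
  compactly_generated : ∀ x : L, ∃ s : Set L,
    (∀ y ∈ s, IsCompactElement y) ∧ sSup s = x
  compact_one : IsCompactElement (1 : L)
  compact_mul : ∀ a b : L, IsCompactElement a →
    IsCompactElement b → IsCompactElement (a * b)

variable {L : Type*}

/-- An expansion function on `L`. -/
def IsExpansion [CompleteLattice L] (δ : L → L) : Prop :=
  (∀ a, a ≤ δ a) ∧ ∀ a b : L, a ≤ b → δ a ≤ δ b

/-- A reduction function on `L`. -/
def IsReduction [CompleteLattice L] (φ : L → L) : Prop :=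
  ∀ a, φ a ≤ a

/-- `b` is `φ`-`δ`-primary to `p`. -/
def PhiDeltaPrimaryTo [MultiplicativeLattice L] (φ δ : L → L) (b p : L) : Prop :=
  ∀ x : L, x * b ≤ p → ¬ x * b ≤ φ p → x ≤ δ p

/-- `b` is `δ`-primary to `p`. -/
def DeltaPrimaryTo [MultiplicativeLattice L] (δ : L → L) (b p : L) : Prop :=
  ∀ x : L, x * b ≤ p → x ≤ δ p

/-- `b` is `φ`-prime to `p`. -/
def PhiPrimeTo [MultiplicativeLattice L] (φ : L → L) (b p : L) : Prop :=
  ∀ x : L, x * b ≤ p → ¬ x * b ≤ φ p → x ≤ p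

/-- The radical `√q`: the join of all compact elements some positive power of which
lies below `q`.  This is the expansion function `δ₁`. -/
def mlRadical [MultiplicativeLattice L] (q : L) : L :=
  sSup {x : L | IsCompactElement x ∧ ∃ n : ℕ, 0 < n ∧ x ^ n ≤ q}

/-- The function `φ_ω(q) = ⋀_{n ≥ 1} qⁿ`. -/
def phiOmega [MultiplicativeLattice L] (q : L) : L := ⨅ n : ℕ, q ^ (n + 1)

/-- The mlResidual `(a : c)`, the join of all `x` with `x * c ≤ a`. -/
def mlResidual [MultiplicativeLattice L] (a c : L) : L := sSup {x : L | x * c ≤ a}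

/-!
A compact element `c` lies below `√p` exactly when some power of it lies below `p`; in particular
`1` does not, so `√p` is proper. For the φ-primeness of `b`, it suffices to treat compact `z` with
`z b ≤ √p` and `z b ≰ φ(√p) = √(φ p)`: then `(z b)ⁿ = zⁿ bⁿ ≤ p` for some `n`, while `zⁿ bⁿ ≰ φ p`,
so the hypothesis on `bⁿ` gives `zⁿ ≤ √p`, whence `z ≤ √p`. A general `x` is the join of compact
elements `c`, and joining each of them with one compact `c₀ ≤ x` with `c₀ b ≰ φ(√p)` brings it into
the compact case.
-/

section

variable [MultiplicativeLattice L]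

open CompleteLattice Quantale

instance : IsQuantale L where
  mul_sSup_distrib := MultiplicativeLattice.mul_sSup
  sSup_mul_distrib s y := by
    simp_rw [mul_comm _ y]
    exact MultiplicativeLattice.mul_sSup y s

instance : IsCompactlyGenerated L := ⟨MultiplicativeLattice.compactly_generated⟩

namespace MultiplicativeLattice

theorem le_one (a : L) : a ≤ 1 := one_eq_top (L := L) ▸ le_top

theorem sup_pow_le (a b : L) : ∀ n : ℕ, (a ⊔ b) ^ n ≤ a ^ n ⊔ b
  | 0 => by simp
  | n + 1 => calc
      (a ⊔ b) ^ (n + 1) ≤ (a ^ n ⊔ b) * (a ⊔ b) :=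
        (pow_succ _ _).trans_le (mul_le_mul_left (sup_pow_le a b n) _)
      _ = a ^ (n + 1) ⊔ a ^ n * b ⊔ (b * a ⊔ b * b) := by
        rw [sup_mul_distrib, mul_sup_distrib, mul_sup_distrib, pow_succ]
      _ ≤ a ^ (n + 1) ⊔ b :=
        sup_le (sup_le le_sup_left (le_sup_of_le_right (mul_le_of_le_one_left' (le_one _))))
          (le_sup_of_le_right (sup_le (mul_le_of_le_one_right' (le_one _))
            (mul_le_of_le_one_right' (le_one _))))

theorem sup_pow_mul_le (a b : L) (m n : ℕ) : (a ⊔ b) ^ (m * n) ≤ a ^ m ⊔ b ^ n := calc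
  (a ⊔ b) ^ (m * n) = ((a ⊔ b) ^ m) ^ n := pow_mul _ _ _
  _ ≤ (b ⊔ a ^ m) ^ n := pow_le_pow_left' ((sup_pow_le a b m).trans_eq (sup_comm _ _)) n
  _ ≤ a ^ m ⊔ b ^ n := (sup_pow_le _ _ n).trans_eq (sup_comm _ _)

theorem isCompactElement_pow {a : L} (ha : IsCompactElement a) : ∀ n : ℕ, IsCompactElement (a ^ n)
  | 0 => by simpa using compact_one
  | n + 1 => by simpa [pow_succ] using compact_mul _ _ (isCompactElement_pow ha n) ha

theorem isCompactElement_sup {a b : L} (ha : IsCompactElement a) (hb : IsCompactElement b) :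
    IsCompactElement (a ⊔ b) := by
  classical
  simpa using isCompactElement_finsetSup (f := id) {a, b} (by simp [ha, hb])

end MultiplicativeLattice

open MultiplicativeLattice

theorem le_mlRadical_of_pow_le {c q : L} (hc : IsCompactElement c) {n : ℕ} (hn : 0 < n)
    (h : c ^ n ≤ q) : c ≤ mlRadical q :=
  le_sSup ⟨hc, n, hn, h⟩

theorem le_mlRadical_iff {c q : L} (hc : IsCompactElement c) :
    c ≤ mlRadical q ↔ ∃ n : ℕ, 0 < n ∧ c ^ n ≤ q := by
  refine ⟨fun h => ?_, fun ⟨n, hn, hcn⟩ => le_mlRadical_of_pow_le hc hn hcn⟩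
  obtain ⟨t, hts, hct⟩ := (isCompactElement_iff_exists_le_sSup_of_le_sSup _ c).1 hc _ h
  have ht : ∃ n : ℕ, 0 < n ∧ t.sup id ^ n ≤ q := by
    refine Finset.sup_induction (p := fun x => ∃ n : ℕ, 0 < n ∧ x ^ n ≤ q)
      ⟨1, one_pos, by simp⟩ ?_ fun x hx => (hts hx).2
    rintro a ⟨m, hm, ham⟩ b ⟨n, hn, hbn⟩
    exact ⟨m * n, Nat.mul_pos hm hn, (sup_pow_mul_le a b m n).trans (sup_le ham hbn)⟩
  obtain ⟨n, hn, htn⟩ := ht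
  exact ⟨n, hn, (pow_le_pow_left' hct n).trans htn⟩

theorem le_mlRadical_of_pow_le_mlRadical {c q : L} (hc : IsCompactElement c) {n : ℕ}
    (hn : 0 < n) (h : c ^ n ≤ mlRadical q) : c ≤ mlRadical q := by
  obtain ⟨m, hm, hcm⟩ := (le_mlRadical_iff (isCompactElement_pow hc n)).1 h
  exact le_mlRadical_of_pow_le hc (Nat.mul_pos hn hm) (by rwa [pow_mul])

theorem mlRadical_lt_one {p : L} (hp : p < 1) : mlRadical p < 1 := by
  refine (le_one _).lt_of_ne fun h => ?_
  obtain ⟨n, -, hn⟩ := (le_mlRadical_iff compact_one).1 h.ge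
  exact hp.not_ge (by simpa using hn)

theorem exists_isCompactElement_le_mul_not_le {x b a : L} (h : ¬ x * b ≤ a) :
    ∃ c, IsCompactElement c ∧ c ≤ x ∧ ¬ c * b ≤ a := by
  by_contra! H
  apply h
  rw [← sSup_compact_le_eq x, sSup_mul_distrib]
  exact iSup₂_le fun c hc => H c hc.1 hc.2

theorem le_mlRadical_of_pow_phiDeltaPrimary {φ : L → L} {p b z : L} (hb : IsCompactElement b)
    (h : ∀ k : ℕ, 0 < k → PhiDeltaPrimaryTo φ mlRadical (b ^ k) p) (hz : IsCompactElement z)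
    (hzb : z * b ≤ mlRadical p) (hzb' : ¬ z * b ≤ mlRadical (φ p)) : z ≤ mlRadical p := by
  have hzbc : IsCompactElement (z * b) := compact_mul _ _ hz hb
  obtain ⟨n, hn, hle⟩ := (le_mlRadical_iff hzbc).1 hzb
  rw [mul_pow] at hle
  have hnot : ¬ z ^ n * b ^ n ≤ φ p := fun hφp =>
    hzb' (le_mlRadical_of_pow_le hzbc hn ((mul_pow z b n).trans_le hφp))
  exact le_mlRadical_of_pow_le_mlRadical hz hn (h n hn _ hle hnot)

end

theorem phiPrime_radical_of_pow_phiDeltaOnePrimary_general [MultiplicativeLattice L]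
    (φ : L → L) (p : L) (hp : p < 1)
    (b : L) (hb : IsCompactElement b)
    (h : ∀ k : ℕ, 0 < k → PhiDeltaPrimaryTo φ mlRadical (b ^ k) p)
    (hcomm : mlRadical (φ p) = φ (mlRadical p)) :
    mlRadical p < 1 ∧ PhiPrimeTo φ b (mlRadical p) := by
  refine ⟨mlRadical_lt_one hp, fun x hx hnx => ?_⟩
  rw [← hcomm] at hnx
  obtain ⟨c₀, hc₀, hc₀x, hc₀b⟩ := exists_isCompactElement_le_mul_not_le hnx
  refine le_iff_compact_le_imp.2 fun c hc hcx => (le_sup_left : c ≤ c ⊔ c₀).trans ?_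
  exact le_mlRadical_of_pow_phiDeltaPrimary hb h (MultiplicativeLattice.isCompactElement_sup hc hc₀)
    ((mul_le_mul_left (sup_le hcx hc₀x) b).trans hx)
    fun hle => hc₀b ((mul_le_mul_left le_sup_right b).trans hle)

theorem phiPrime_radical_of_pow_phiDeltaOnePrimary [MultiplicativeLattice L]
    (φ : L → L) (hφ : IsReduction φ) (p : L) (hp : p < 1)
    (b : L) (hb : IsCompactElement b)
    (h : ∀ k : ℕ, 0 < k → PhiDeltaPrimaryTo φ mlRadical (b ^ k) p)
    (hcomm : mlRadical (φ p) = φ (mlRadical p)) :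
    mlRadical p < 1 ∧ PhiPrimeTo φ b (mlRadical p) :=
  phiPrime_radical_of_pow_phiDeltaOnePrimary_general φ p hp b hb h hcomm
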